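/- Let J(t,x,y) := (4πt)^{−1/2}[exp(−(x−y)²/(4t)) − exp(−(x+y)²/(4t))] and K(t,x,y) := (y/x)·∂J/∂y(t,x,y) for x > 0. Then there exists a constant C > 0 such that for every t > 0, x ∈ (0,1], y ∈ [0,1] with y ≥ 2x, |K(t,x,y)| ≤ e^{−y²/(16t)}·(C·y/t^{3/2} + C·y³/t^{5/2}). -/

import Mathlib

noncomputable def dJdy (t x y : ℝ) : ℝ :=
  (Real.sqrt (4 * Real.pi * t))⁻¹ * (1 / (2 * t)) *
    ((x - y) * Real.exp (-(x - y) ^ 2 / (4 * t)) +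
      (x + y) * Real.exp (-(x + y) ^ 2 / (4 * t)))

/-!
Write `A`, `B` for the two Gaussians in `dJdy`. The bracket equals `x (A + B) - y (A - B)`, and the
image charge satisfies `B = A e^{-xy/t}`, so `0 ≤ A - B ≤ A·xy/t` by `1 - e^{-z} ≤ z`. Hence
`(y/x)|bracket| ≤ y (A + B) + A y³/t`, and on `{y ≥ 2x}` both Gaussians are at most `e^{-y²/(16t)}`
because `|x ± y| ≥ y/2`. With `√(4πt) ≥ 2√t` this gives the bound with `C = 1`.
-/

open Real

lemma exp_neg_sq_div_le_of_sq_le {a b t : ℝ} (ht : 0 ≤ t) (hab : b ^ 2 ≤ a ^ 2) :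
    exp (-a ^ 2 / (4 * t)) ≤ exp (-b ^ 2 / (4 * t)) :=
  exp_le_exp.mpr (div_le_div_of_nonneg_right (neg_le_neg hab) (by positivity))

lemma exp_neg_add_sq_eq {t : ℝ} (ht : t ≠ 0) (x y : ℝ) :
    exp (-(x + y) ^ 2 / (4 * t)) = exp (-(x - y) ^ 2 / (4 * t)) * exp (-(x * y) / t) := by
  rw [← exp_add]
  congr 1
  field_simp
  ring

lemma exp_neg_sub_sq_sub_exp_neg_add_sq_le {t : ℝ} (ht : t ≠ 0) (x y : ℝ) :
    exp (-(x - y) ^ 2 / (4 * t)) - exp (-(x + y) ^ 2 / (4 * t)) ≤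
      exp (-(x - y) ^ 2 / (4 * t)) * (x * y / t) := by
  have h : 1 - exp (-(x * y) / t) ≤ x * y / t := by
    linarith [add_one_le_exp (-(x * y) / t), neg_div t (x * y)]
  rw [exp_neg_add_sq_eq ht]
  nlinarith [exp_pos (-(x - y) ^ 2 / (4 * t))]

lemma abs_sub_mul_add_add_mul_le {x y A B : ℝ} (hx : 0 ≤ x) (hB : 0 ≤ B) (hBA : B ≤ A) :
    |(x - y) * A + (x + y) * B| ≤ x * (A + B) + |y| * (A - B) :=
  calc |(x - y) * A + (x + y) * B| = |x * (A + B) - y * (A - B)| := by ring_nf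
    _ ≤ |x * (A + B)| + |y * (A - B)| := abs_sub _ _
    _ = x * (A + B) + |y| * (A - B) := by
      rw [abs_mul, abs_mul, abs_of_nonneg hx, abs_of_nonneg (by linarith : 0 ≤ A + B),
        abs_of_nonneg (by linarith : 0 ≤ A - B)]

lemma inv_sqrt_four_pi_mul_le {t : ℝ} (ht : 0 < t) : (√(4 * π * t))⁻¹ ≤ (2 * √t)⁻¹ := by
  apply inv_anti₀ (by positivity)
  rw [sqrt_mul (by positivity), show (2 : ℝ) = √4 by
    rw [show (4 : ℝ) = 2 ^ 2 by norm_num, sqrt_sq zero_le_two]]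
  gcongr
  nlinarith [pi_gt_three]

lemma abs_div_mul_dJdy_le {t x y : ℝ} (ht : 0 < t) (hx : 0 < x) (hy : 0 ≤ y) (hxy : 2 * x ≤ y) :
    |y / x * dJdy t x y| ≤
      exp (-y ^ 2 / (16 * t)) * (y / (t * √t) / 2 + y ^ 3 / (t ^ 2 * √t) / 4) := by
  set A := exp (-(x - y) ^ 2 / (4 * t))
  set B := exp (-(x + y) ^ 2 / (4 * t))
  set E := exp (-y ^ 2 / (16 * t))
  have hAE : A ≤ E :=
    calc A ≤ exp (-(y / 2) ^ 2 / (4 * t)) := exp_neg_sq_div_le_of_sq_le ht.le (by nlinarith)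
      _ = E := congrArg exp (by ring)
  have hBA : B ≤ A := exp_neg_sq_div_le_of_sq_le ht.le (by nlinarith)
  have hBE : B ≤ E := hBA.trans hAE
  have hAB : A - B ≤ A * (x * y / t) := exp_neg_sub_sq_sub_exp_neg_add_sq_le ht.ne' x y
  have hF := abs_sub_mul_add_add_mul_le (y := y) hx.le (exp_pos _).le hBA
  rw [abs_of_nonneg hy] at hF
  have hP := inv_sqrt_four_pi_mul_le ht
  calc |y / x * dJdy t x y|
      = y / x * ((√(4 * π * t))⁻¹ * (1 / (2 * t))) * |(x - y) * A + (x + y) * B| := by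
        rw [dJdy, ← mul_assoc, abs_mul, abs_of_nonneg (by positivity)]
    _ ≤ y / x * ((2 * √t)⁻¹ * (1 / (2 * t))) * (x * (A + B) + y * (A * (x * y / t))) := by
        gcongr
        linarith [mul_le_mul_of_nonneg_left hAB hy]
    _ = (y * (A + B) + y ^ 3 * A / t) / (4 * (t * √t)) := by
        field_simp
        ring
    _ ≤ (y * (E + E) + y ^ 3 * E / t) / (4 * (t * √t)) := by gcongr
    _ = E * (y / (t * √t) / 2 + y ^ 3 / (t ^ 2 * √t) / 4) := by
        field_simp
        ring

theorem stmt11 : ∃ C > 0, ∀ t > 0, ∀ x ∈ Set.Ioc (0:ℝ) 1,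
    ∀ y ∈ Set.Icc (0:ℝ) 1, 2 * x ≤ y →
    |(y / x) * dJdy t x y| ≤
      Real.exp (-y ^ 2 / (16 * t)) *
        (C * y / (t * Real.sqrt t) + C * y ^ 3 / (t ^ 2 * Real.sqrt t)) := by
  refine ⟨1, one_pos, fun t ht x hx y hy hxy => (abs_div_mul_dJdy_le ht hx.1 hy.1 hxy).trans ?_⟩
  simp only [one_mul]
  gcongr ?_ * (?_ + ?_)
  · exact half_le_self (div_nonneg hy.1 (by positivity))
  · exact div_le_self (div_nonneg (pow_nonneg hy.1 3) (by positivity)) (by norm_num)
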